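/- arXiv:2202.06553 — 2 statements merged into one kernel-verified Lean document; each statement's English description precedes it below -/
import Mathlib

section
/- For a ∈ D with a ≠ 0, the harmonic function f(z) = ā·φ_a(z) + a·conj(φ_a(z)), where φ_a(z) = (a-z)/(1-āz), satisfies |||f|||_{HB(1)} = 2|a|² + 2|a|. -/
/-! By the Schwarz–Pick identity `(1 - |z|²)|φ_a'(z)| = 1 - |φ_a(z)|²`, the Bloch quantity of
`f = ā φ_a + a conj φ_a` is `2|a|(1 - |φ_a(z)|²)`, whose supremum `2|a|` is attained at `z = a`,
where `φ_a` vanishes. Moreover `f(0) = ā a + a ā = 2|a|²`. -/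

open Complex Metric Set Filter
noncomputable section

/-- The open unit disk in `ℂ`. -/
def unitDisk : Set ℂ := Metric.ball (0 : ℂ) 1

/-- The set of values `(1-|z|²)^α (|f_z(z)| + |f_z̄(z)|)` for `z` in the unit disk, where the
harmonic function is `f = h + conj g` with `h, g` analytic, so `f_z = h'` and `f_z̄ = conj g'`. -/
def hbSet (α : ℝ) (h g : ℂ → ℂ) : Set ℝ :=
  (fun z => (1 - ‖z‖ ^ 2) ^ α *
    (‖deriv h z‖ + ‖deriv g z‖)) '' unitDisk

/-- The harmonic α-Bloch seminorm `‖f‖_{HB(α)}` of `f = h + conj g`. -/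
def hbSemi (α : ℝ) (h g : ℂ → ℂ) : ℝ := sSup (hbSet α h g)

/-- The harmonic α-Bloch norm `|||f|||_{HB(α)} = |f(0)| + ‖f‖_{HB(α)}` of `f = h + conj g`. -/
def hbNorm (α : ℝ) (h g : ℂ → ℂ) : ℝ :=
  ‖h 0 + (starRingEnd ℂ) (g 0)‖ + hbSemi α h g

/-- An analytic self-map of the unit disk. -/
def IsSelfMap (φ : ℂ → ℂ) : Prop :=
  DifferentiableOn ℂ φ unitDisk ∧ MapsTo φ unitDisk unitDisk

/-- `f = h + conj g` is a harmonic α-Bloch function: `h, g` analytic on the disk and the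
Bloch quantity is bounded. -/
def IsHB (α : ℝ) (h g : ℂ → ℂ) : Prop :=
  DifferentiableOn ℂ h unitDisk ∧ DifferentiableOn ℂ g unitDisk ∧ BddAbove (hbSet α h g)

/-- The composition operator `C_φ` is an isometry on `HB(α)`: `|||f∘φ||| = |||f|||` for every
harmonic α-Bloch function `f = h + conj g` (note `f ∘ φ = h∘φ + conj (g∘φ)`). -/
def IsIsometryOn (α : ℝ) (φ : ℂ → ℂ) : Prop :=
  ∀ h g : ℂ → ℂ, IsHB α h g → hbNorm α (h ∘ φ) (g ∘ φ) = hbNorm α h g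

/-- `φ` is a rotation of the unit disk. -/
def IsRotation (φ : ℂ → ℂ) : Prop :=
  ∃ lam : ℂ, ‖lam‖ = 1 ∧ ∀ z ∈ unitDisk, φ z = lam * z

/-- `τ_φ(z) = (1-|z|²)|φ'(z)| / (1-|φ(z)|²)`. -/
def tauPhi (φ : ℂ → ℂ) (z : ℂ) : ℝ :=
  (1 - ‖z‖ ^ 2) * ‖deriv φ z‖ / (1 - ‖φ z‖ ^ 2)

open ComplexConjugate

def diskAut (a : ℂ) (z : ℂ) : ℂ := (a - z) / (1 - conj a * z)

lemma mem_unitDisk_iff {z : ℂ} : z ∈ unitDisk ↔ ‖z‖ < 1 := by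
  simp [unitDisk]

lemma one_sub_conj_mul_ne_zero {a z : ℂ} (ha : ‖a‖ ≤ 1) (hz : ‖z‖ < 1) :
    1 - conj a * z ≠ 0 := by
  refine sub_ne_zero.mpr fun h => ?_
  have : ‖conj a * z‖ < 1 := by
    rw [norm_mul, norm_conj]
    nlinarith [norm_nonneg a, norm_nonneg z]
  simp [← h] at this

lemma diskAut_self (a : ℂ) : diskAut a a = 0 := by
  simp [diskAut]

lemma diskAut_zero (a : ℂ) : diskAut a 0 = a := by
  simp [diskAut]

lemma hasDerivAt_diskAut {a z : ℂ} (h : 1 - conj a * z ≠ 0) :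
    HasDerivAt (diskAut a) ((conj a * a - 1) / (1 - conj a * z) ^ 2) z := by
  have hnum : HasDerivAt (fun w => a - w) (-1) z := (hasDerivAt_id z).const_sub a
  have hden : HasDerivAt (fun w => 1 - conj a * w) (-conj a) z := by
    simpa using ((hasDerivAt_id z).const_mul (conj a)).const_sub 1
  exact (hnum.div hden h).congr_deriv (by ring)

lemma sq_norm_one_sub_conj_mul_sub_sq_norm_sub (a z : ℂ) :
    ‖1 - conj a * z‖ ^ 2 - ‖a - z‖ ^ 2 = (1 - ‖a‖ ^ 2) * (1 - ‖z‖ ^ 2) := by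
  simp only [Complex.sq_norm, normSq_apply, sub_re, sub_im, mul_re, mul_im, conj_re, conj_im,
    one_re, one_im]
  ring

lemma one_sub_sq_norm_diskAut {a z : ℂ} (h : 1 - conj a * z ≠ 0) :
    1 - ‖diskAut a z‖ ^ 2 = (1 - ‖a‖ ^ 2) * (1 - ‖z‖ ^ 2) / ‖1 - conj a * z‖ ^ 2 := by
  rw [← sq_norm_one_sub_conj_mul_sub_sq_norm_sub a z, diskAut, norm_div, div_pow, sub_div,
    div_self (pow_ne_zero 2 (norm_ne_zero_iff.mpr h))]

theorem one_sub_sq_norm_mul_norm_deriv_diskAut {a z : ℂ} (ha : ‖a‖ ≤ 1) (hz : ‖z‖ < 1) :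
    (1 - ‖z‖ ^ 2) * ‖deriv (diskAut a) z‖ = 1 - ‖diskAut a z‖ ^ 2 := by
  have h := one_sub_conj_mul_ne_zero ha hz
  have hnorm : ‖conj a * a - 1‖ = 1 - ‖a‖ ^ 2 := by
    rw [conj_mul', ← ofReal_pow, ← ofReal_one, ← ofReal_sub, norm_real, Real.norm_eq_abs,
      abs_of_nonpos (by nlinarith [norm_nonneg a])]
    ring
  rw [(hasDerivAt_diskAut h).deriv, one_sub_sq_norm_diskAut h, norm_div, norm_pow, hnorm]
  ring

lemma hbSet_one_const_mul_diskAut {a : ℂ} (ha : ‖a‖ ≤ 1) (c d : ℂ) :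
    hbSet 1 (fun w => c * diskAut a w) (fun w => d * diskAut a w) =
      (fun z => (‖c‖ + ‖d‖) * (1 - ‖diskAut a z‖ ^ 2)) '' unitDisk := by
  refine image_congr fun z hz => ?_
  have hz := mem_unitDisk_iff.mp hz
  have hdiff := (hasDerivAt_diskAut (one_sub_conj_mul_ne_zero ha hz)).differentiableAt
  rw [Real.rpow_one, deriv_const_mul c hdiff, deriv_const_mul d hdiff, norm_mul, norm_mul,
    ← one_sub_sq_norm_mul_norm_deriv_diskAut ha hz]
  ring

theorem hbSemi_one_const_mul_diskAut {a : ℂ} (ha : ‖a‖ < 1) (c d : ℂ) :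
    hbSemi 1 (fun w => c * diskAut a w) (fun w => d * diskAut a w) = ‖c‖ + ‖d‖ := by
  rw [hbSemi, hbSet_one_const_mul_diskAut ha.le]
  refine IsGreatest.csSup_eq ⟨⟨a, mem_unitDisk_iff.mpr ha, by simp [diskAut_self]⟩, ?_⟩
  rintro _ ⟨z, -, rfl⟩
  nlinarith [norm_nonneg c, norm_nonneg d, sq_nonneg ‖diskAut a z‖]

theorem stmt3_general (a : ℂ) (ha : a ∈ unitDisk) :
    hbNorm 1 (fun z => (starRingEnd ℂ) a * ((a - z) / (1 - (starRingEnd ℂ) a * z)))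
      (fun z => (starRingEnd ℂ) a * ((a - z) / (1 - (starRingEnd ℂ) a * z))) =
    2 * ‖a‖ ^ 2 + 2 * ‖a‖ := by
  change ‖conj a * diskAut a 0 + conj (conj a * diskAut a 0)‖ +
      hbSemi 1 (fun z => conj a * diskAut a z) (fun z => conj a * diskAut a z) = _
  have hconst : conj a * a = ((‖a‖ ^ 2 : ℝ) : ℂ) := by push_cast; exact conj_mul' a
  rw [hbSemi_one_const_mul_diskAut (mem_unitDisk_iff.mp ha), diskAut_zero, hconst, conj_ofReal,
    ← ofReal_add, norm_real, Real.norm_eq_abs, abs_of_nonneg (by positivity), norm_conj]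
  ring

/-- for `a ∈ D`, `a ≠ 0`, the harmonic function
`f = ā φ_a + a conj(φ_a)` with `φ_a(z) = (a-z)/(1-āz)` (so `f = h + conj g` with
`h = g = ā φ_a`) satisfies `|||f|||_{HB(1)} = 2|a|² + 2|a|`. -/
theorem stmt3 (a : ℂ) (ha : a ∈ unitDisk) (ha0 : a ≠ 0) :
    hbNorm 1 (fun z => (starRingEnd ℂ) a * ((a - z) / (1 - (starRingEnd ℂ) a * z)))
      (fun z => (starRingEnd ℂ) a * ((a - z) / (1 - (starRingEnd ℂ) a * z))) =
    2 * ‖a‖ ^ 2 + 2 * ‖a‖ :=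
  stmt3_general a ha
end
end

section
/- Let φ be an analytic self-map of D with φ(0) = 0 which is not a rotation, and suppose that for every a ∈ D there exists a sequence {z_n} ⊂ D with |z_n| → 1, φ(z_n) → a, and τ_φ(z_n) → 1, where τ_φ(z) = (1-|z|²)|φ'(z)|/(1-|φ(z)|²). Then C_φ is an isometry on the harmonic Bloch space HB(1). -/
open Complex Metric Set Filter
noncomputable section

/-!
The chain rule gives `(1 - |z|²)(|(h∘φ)'(z)| + |(g∘φ)'(z)|) = τ_φ(z) · B(φ(z))`, where
`B(w) = (1 - |w|²)(|h'(w)| + |g'(w)|)` is the Bloch density of `f = h + conj g`. By the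
Schwarz–Pick lemma `τ_φ ≤ 1`, so the seminorm of `f ∘ φ` is at most that of `f`. Conversely, along
a sequence with `φ(z_n) → a` and `τ_φ(z_n) → 1` these values tend to `B(a)` by continuity of `B`,
which gives the reverse inequality; `φ(0) = 0` makes the values at `0` agree.
-/

open scoped ComplexConjugate

def diskMobius (a w : ℂ) : ℂ := (w + a) / (1 + conj a * w)

lemma one_add_conj_mul_ne_zero {a w : ℂ} (ha : ‖a‖ < 1) (hw : ‖w‖ < 1) :
    1 + conj a * w ≠ 0 := by
  intro h
  have : ‖conj a * w‖ = 1 := by rw [show conj a * w = -1 by linear_combination h]; simp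
  rw [norm_mul, Complex.norm_conj] at this
  nlinarith [norm_nonneg a, norm_nonneg w]

lemma normSq_one_add_conj_mul_sub_normSq_add (a w : ℂ) :
    normSq (1 + conj a * w) - normSq (w + a) = (1 - normSq a) * (1 - normSq w) := by
  simp only [normSq_apply, add_re, add_im, mul_re, mul_im, conj_re, conj_im, one_re, one_im]
  ring

lemma norm_diskMobius_lt_one {a w : ℂ} (ha : ‖a‖ < 1) (hw : ‖w‖ < 1) :
    ‖diskMobius a w‖ < 1 := by
  have hsq : ‖w + a‖ ^ 2 < ‖1 + conj a * w‖ ^ 2 := by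
    have ha' : normSq a < 1 := by rw [normSq_eq_norm_sq]; nlinarith [norm_nonneg a]
    have hw' : normSq w < 1 := by rw [normSq_eq_norm_sq]; nlinarith [norm_nonneg w]
    rw [← normSq_eq_norm_sq, ← normSq_eq_norm_sq]
    nlinarith [normSq_one_add_conj_mul_sub_normSq_add a w]
  have hlt := lt_of_pow_lt_pow_left₀ 2 (norm_nonneg _) hsq
  rw [diskMobius, norm_div]
  exact (div_lt_one ((norm_nonneg _).trans_lt hlt)).mpr hlt

lemma mapsTo_diskMobius {a : ℂ} (ha : ‖a‖ < 1) :
    MapsTo (diskMobius a) (ball 0 1) (ball 0 1) := fun w hw => by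
  rw [mem_ball_zero_iff] at hw ⊢
  exact norm_diskMobius_lt_one ha hw

lemma hasDerivAt_diskMobius {a w : ℂ} (hw : 1 + conj a * w ≠ 0) :
    HasDerivAt (diskMobius a) (((1 - ‖a‖ ^ 2 : ℝ) : ℂ) / (1 + conj a * w) ^ 2) w := by
  have hnum : HasDerivAt (fun w : ℂ => w + a) 1 w := (hasDerivAt_id w).add_const a
  have hden : HasDerivAt (fun w : ℂ => 1 + conj a * w) (conj a * 1) w :=
    ((hasDerivAt_id w).const_mul _).const_add 1
  refine (hnum.div hden hw).congr_deriv ?_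
  have : ((‖a‖ ^ 2 : ℝ) : ℂ) = a * conj a := by rw [mul_conj, normSq_eq_norm_sq]
  rw [ofReal_sub, ofReal_one, this]
  ring

lemma differentiableOn_diskMobius {a : ℂ} (ha : ‖a‖ < 1) :
    DifferentiableOn ℂ (diskMobius a) (ball 0 1) := fun _ hw =>
  (hasDerivAt_diskMobius (one_add_conj_mul_ne_zero ha (mem_ball_zero_iff.mp hw)))
    |>.differentiableAt.differentiableWithinAt

lemma one_add_conj_neg_mul_self (b : ℂ) : 1 + conj (-b) * b = ((1 - ‖b‖ ^ 2 : ℝ) : ℂ) := by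
  rw [map_neg, ofReal_sub, ofReal_one, ← normSq_eq_norm_sq, normSq_eq_conj_mul_self]
  ring

lemma diskMobius_zero (a : ℂ) : diskMobius a 0 = a := by simp [diskMobius]

lemma diskMobius_neg_self (b : ℂ) : diskMobius (-b) b = 0 := by simp [diskMobius]

lemma hasDerivAt_diskMobius_zero (a : ℂ) :
    HasDerivAt (diskMobius a) ((1 - ‖a‖ ^ 2 : ℝ) : ℂ) 0 := by
  simpa using hasDerivAt_diskMobius (a := a) (w := 0) (by simp)

lemma hasDerivAt_diskMobius_neg_self {b : ℂ} (hb : ‖b‖ < 1) :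
    HasDerivAt (diskMobius (-b)) ((1 - ‖b‖ ^ 2 : ℝ) : ℂ)⁻¹ b := by
  have hpos : (1 - ‖b‖ ^ 2 : ℝ) ≠ 0 := by nlinarith [norm_nonneg b]
  have := hasDerivAt_diskMobius (a := -b) (w := b)
    (one_add_conj_mul_ne_zero (by rwa [norm_neg]) hb)
  rw [one_add_conj_neg_mul_self, norm_neg] at this
  refine this.congr_deriv ?_
  field_simp

/-- Schwarz–Pick lemma, infinitesimal form. -/
theorem one_sub_sq_mul_norm_deriv_le {φ : ℂ → ℂ} (hd : DifferentiableOn ℂ φ (ball 0 1))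
    (hm : MapsTo φ (ball 0 1) (ball 0 1)) {a : ℂ} (ha : a ∈ ball 0 1) :
    (1 - ‖a‖ ^ 2) * ‖deriv φ a‖ ≤ 1 - ‖φ a‖ ^ 2 := by
  set b := φ a
  have ha1 : ‖a‖ < 1 := mem_ball_zero_iff.mp ha
  have hb1 : ‖b‖ < 1 := mem_ball_zero_iff.mp (hm ha)
  have hnb1 : ‖-b‖ < 1 := by rwa [norm_neg]
  -- `ψ` is a self-map of the disk fixing `0`, to which the Schwarz lemma applies.
  set ψ := diskMobius (-b) ∘ φ ∘ diskMobius a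
  have hψm : MapsTo ψ (ball 0 1) (ball 0 1) :=
    (mapsTo_diskMobius hnb1).comp (hm.comp (mapsTo_diskMobius ha1))
  have hψd : DifferentiableOn ℂ ψ (ball 0 1) :=
    (differentiableOn_diskMobius hnb1).comp
      (hd.comp (differentiableOn_diskMobius ha1) (mapsTo_diskMobius ha1))
      (hm.comp (mapsTo_diskMobius ha1))
  have hψ0 : ψ 0 = 0 := by simp [ψ, diskMobius_zero, b, diskMobius_neg_self]
  have hφa : HasDerivAt φ (deriv φ a) (diskMobius a 0) := by
    rw [diskMobius_zero]
    exact (hd.differentiableAt (isOpen_ball.mem_nhds ha)).hasDerivAt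
  have hψ' : HasDerivAt ψ
      (((1 - ‖b‖ ^ 2 : ℝ) : ℂ)⁻¹ * (deriv φ a * ((1 - ‖a‖ ^ 2 : ℝ) : ℂ))) 0 := by
    have hinner := hφa.comp 0 (hasDerivAt_diskMobius_zero a)
    have houter :
        HasDerivAt (diskMobius (-b)) ((1 - ‖b‖ ^ 2 : ℝ) : ℂ)⁻¹ (φ (diskMobius a 0)) := by
      rw [diskMobius_zero]
      exact hasDerivAt_diskMobius_neg_self hb1
    exact houter.comp 0 hinner
  have hschwarz := Complex.norm_deriv_le_one_of_mapsTo_ball hψd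
    (by rw [hψ0]; exact hψm.mono_right ball_subset_closedBall) one_pos
  have hpa : 0 < 1 - ‖a‖ ^ 2 := by nlinarith [norm_nonneg a]
  have hpb : 0 < 1 - ‖b‖ ^ 2 := by nlinarith [norm_nonneg b]
  rw [hψ'.deriv, norm_mul, norm_mul, norm_inv, norm_real, norm_real, Real.norm_of_nonneg hpa.le,
    Real.norm_of_nonneg hpb.le, inv_mul_le_iff₀ hpb] at hschwarz
  linarith

def blochDensity (h g : ℂ → ℂ) (w : ℂ) : ℝ := (1 - ‖w‖ ^ 2) * (‖deriv h w‖ + ‖deriv g w‖)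

lemma hbSet_one_eq (h g : ℂ → ℂ) : hbSet 1 h g = blochDensity h g '' unitDisk := by
  simp only [hbSet, Real.rpow_one]
  rfl

lemma blochDensity_nonneg (h g : ℂ → ℂ) {w : ℂ} (hw : w ∈ unitDisk) : 0 ≤ blochDensity h g w := by
  have hw1 : ‖w‖ < 1 := mem_ball_zero_iff.mp hw
  have : 0 ≤ 1 - ‖w‖ ^ 2 := by nlinarith [norm_nonneg w]
  unfold blochDensity
  positivity

lemma continuousOn_blochDensity {h g : ℂ → ℂ} (hh : DifferentiableOn ℂ h unitDisk)
    (hg : DifferentiableOn ℂ g unitDisk) : ContinuousOn (blochDensity h g) unitDisk := by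
  have hh' := (hh.analyticOnNhd isOpen_ball).deriv.continuousOn
  have hg' := (hg.analyticOnNhd isOpen_ball).deriv.continuousOn
  exact (continuous_const.sub (continuous_norm.pow 2)).continuousOn.mul (hh'.norm.add hg'.norm)

lemma tauPhi_le_one {φ : ℂ → ℂ} (hφ : IsSelfMap φ) {z : ℂ} (hz : z ∈ unitDisk) :
    tauPhi φ z ≤ 1 :=
  div_le_one_of_le₀ (one_sub_sq_mul_norm_deriv_le hφ.1 hφ.2 hz)
    (by nlinarith [norm_nonneg (φ z), mem_ball_zero_iff.mp (hφ.2 hz)])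

lemma blochDensity_comp {φ h g : ℂ → ℂ} (hφ : IsSelfMap φ) (hh : DifferentiableOn ℂ h unitDisk)
    (hg : DifferentiableOn ℂ g unitDisk) {z : ℂ} (hz : z ∈ unitDisk) :
    blochDensity (h ∘ φ) (g ∘ φ) z = tauPhi φ z * blochDensity h g (φ z) := by
  have hφz : DifferentiableAt ℂ φ z := hφ.1.differentiableAt (isOpen_ball.mem_nhds hz)
  have hdisk : φ z ∈ unitDisk := hφ.2 hz
  have hpos : 1 - ‖φ z‖ ^ 2 ≠ 0 := by nlinarith [norm_nonneg (φ z), mem_ball_zero_iff.mp hdisk]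
  rw [blochDensity, blochDensity, tauPhi,
    deriv_comp z (hh.differentiableAt (isOpen_ball.mem_nhds hdisk)) hφz,
    deriv_comp z (hg.differentiableAt (isOpen_ball.mem_nhds hdisk)) hφz, norm_mul, norm_mul]
  field_simp

section CompositionOperator

variable {φ h g : ℂ → ℂ}

lemma le_hbSemi_of_mem_hbSet_comp (hφ : IsSelfMap φ) (hhb : IsHB 1 h g) {x : ℝ}
    (hx : x ∈ hbSet 1 (h ∘ φ) (g ∘ φ)) : x ≤ hbSemi 1 h g := by
  rw [hbSet_one_eq] at hx
  obtain ⟨z, hz, rfl⟩ := hx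
  have hmem : blochDensity h g (φ z) ∈ hbSet 1 h g := by
    rw [hbSet_one_eq]
    exact mem_image_of_mem _ (hφ.2 hz)
  calc blochDensity (h ∘ φ) (g ∘ φ) z = tauPhi φ z * blochDensity h g (φ z) :=
        blochDensity_comp hφ hhb.1 hhb.2.1 hz
    _ ≤ 1 * blochDensity h g (φ z) :=
        mul_le_mul_of_nonneg_right (tauPhi_le_one hφ hz) (blochDensity_nonneg h g (hφ.2 hz))
    _ ≤ hbSemi 1 h g := by rw [one_mul]; exact le_csSup hhb.2.2 hmem

lemma hbSet_nonempty (α : ℝ) (h g : ℂ → ℂ) : (hbSet α h g).Nonempty :=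
  ⟨_, mem_image_of_mem _ (mem_ball_self one_pos)⟩

lemma hbSemi_comp_le (hφ : IsSelfMap φ) (hhb : IsHB 1 h g) :
    hbSemi 1 (h ∘ φ) (g ∘ φ) ≤ hbSemi 1 h g :=
  csSup_le (hbSet_nonempty 1 _ _) fun _ hx => le_hbSemi_of_mem_hbSet_comp hφ hhb hx

lemma hbSemi_le_hbSemi_comp (hφ : IsSelfMap φ) (hhb : IsHB 1 h g)
    (hseq : ∀ a ∈ unitDisk, ∃ z : ℕ → ℂ, (∀ n, z n ∈ unitDisk) ∧
      Tendsto (fun n => φ (z n)) atTop (nhds a) ∧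
      Tendsto (fun n => tauPhi φ (z n)) atTop (nhds 1)) :
    hbSemi 1 h g ≤ hbSemi 1 (h ∘ φ) (g ∘ φ) := by
  have hbdd : BddAbove (hbSet 1 (h ∘ φ) (g ∘ φ)) :=
    ⟨_, fun _ hx => le_hbSemi_of_mem_hbSet_comp hφ hhb hx⟩
  refine csSup_le (hbSet_nonempty 1 _ _) ?_
  rw [hbSet_one_eq]
  rintro _ ⟨a, ha, rfl⟩
  obtain ⟨z, hz, hφz, hτ⟩ := hseq a ha
  have hB : Tendsto (fun n => blochDensity h g (φ (z n))) atTop (nhds (blochDensity h g a)) :=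
    ((continuousOn_blochDensity hhb.1 hhb.2.1).continuousAt
      (isOpen_ball.mem_nhds ha)).tendsto.comp hφz
  have hlim : Tendsto (fun n => blochDensity (h ∘ φ) (g ∘ φ) (z n)) atTop
      (nhds (blochDensity h g a)) := by
    simpa only [blochDensity_comp hφ hhb.1 hhb.2.1 (hz _), one_mul] using hτ.mul hB
  refine le_of_tendsto hlim (Eventually.of_forall fun n => le_csSup hbdd ?_)
  rw [hbSet_one_eq]
  exact mem_image_of_mem _ (hz n)

end CompositionOperator

theorem stmt6_general (φ : ℂ → ℂ) (hφ : IsSelfMap φ) (h0 : φ 0 = 0)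
    (hseq : ∀ a ∈ unitDisk, ∃ z : ℕ → ℂ, (∀ n, z n ∈ unitDisk) ∧
      Tendsto (fun n => ‖z n‖) atTop (nhds 1) ∧
      Tendsto (fun n => φ (z n)) atTop (nhds a) ∧
      Tendsto (fun n => tauPhi φ (z n)) atTop (nhds 1)) :
    IsIsometryOn 1 φ := by
  intro h g hhb
  have hseq' : ∀ a ∈ unitDisk, ∃ z : ℕ → ℂ, (∀ n, z n ∈ unitDisk) ∧
      Tendsto (fun n => φ (z n)) atTop (nhds a) ∧
      Tendsto (fun n => tauPhi φ (z n)) atTop (nhds 1) := fun a ha => by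
    obtain ⟨z, hz, -, hφz, hτ⟩ := hseq a ha
    exact ⟨z, hz, hφz, hτ⟩
  have hsemi : hbSemi 1 (h ∘ φ) (g ∘ φ) = hbSemi 1 h g :=
    le_antisymm (hbSemi_comp_le hφ hhb) (hbSemi_le_hbSemi_comp hφ hhb hseq')
  simp only [hbNorm, hsemi, Function.comp_apply, h0]

/-- let `φ` be an analytic self-map of `D` with `φ(0) = 0` which is not a rotation,
and suppose that for every `a ∈ D` there is a sequence `(z_n) ⊂ D` with `|z_n| → 1`,
`φ(z_n) → a` and `τ_φ(z_n) → 1`.  Then `C_φ` is an isometry on `HB(1)`. -/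
theorem stmt6 (φ : ℂ → ℂ) (hφ : IsSelfMap φ) (h0 : φ 0 = 0) (hrot : ¬ IsRotation φ)
    (hseq : ∀ a ∈ unitDisk, ∃ z : ℕ → ℂ, (∀ n, z n ∈ unitDisk) ∧
      Tendsto (fun n => ‖z n‖) atTop (nhds 1) ∧
      Tendsto (fun n => φ (z n)) atTop (nhds a) ∧
      Tendsto (fun n => tauPhi φ (z n)) atTop (nhds 1)) :
    IsIsometryOn 1 φ :=
  stmt6_general φ hφ h0 hseq
end
end
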